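/- Let S = {a_1, ..., a_n} (n >= 2, at least two a_i positive) be a multiset of nonnegative integers. There exist nonnegative integers t_1, ..., t_n with t_i >= a_i such that the nim-sum of t_1, ..., t_n and the nim-sum of (t_1 - a_1), ..., (t_n - a_n) are both 0, if and only if: either n is odd and S is balanced; or n is even and (S is balanced and some a_i has a 0-bit in position k, or S is smooth and n >= 4, or S is even). -/

import Mathlib

/-!
Write `b = t - a`: we need `b` with `b` and `a + b` both of nim-sum zero. A vector has nim-sum
zero iff its coordinate sum is even and the vector of its halves has nim-sum zero. Reading `b`
bit by bit therefore gives a carry recursion: `a` is such a difference iff `∑ a` is even and,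
for some `0/1`-vector `c` of even weight, `(a + c) / 2` is one as well.

Scaling by `2 ^ k` reduces to the case where some `a i` is odd. If some `a i` is also even, then
flipping two odd entries, or one odd and one even entry, gives a `c` for which `(a + c) / 2` again
has even sum and entries of both parities, and induction on `∑ a` concludes. If all `a i` are
odd, `∑ (a i + c i) / 2 = ∑ a i / 2 + ∑ c i` must be even, which is smoothness, and conversely
for `n ≥ 4` one carry step then reaches mixed parity; for `n = 2` the two equations force
`a 0 = a 1`.
-/

/-- The nim-sum (bitwise XOR) of a list of naturals. -/
def nimSum (l : List ℕ) : ℕ := l.foldr (· ^^^ ·) 0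

open scoped Finset

@[simp] lemma nimSum_nil : nimSum [] = 0 := rfl

@[simp] lemma nimSum_cons (x : ℕ) (l : List ℕ) : nimSum (x :: l) = x ^^^ nimSum l := rfl

lemma nimSum_mod_two (l : List ℕ) : nimSum l % 2 = l.sum % 2 := by
  induction l with
  | nil => rfl
  | cons x l ih =>
    rw [nimSum_cons, Nat.xor_mod_two_eq, List.sum_cons, Nat.add_mod, ih, ← Nat.add_mod]

lemma nimSum_div_two (l : List ℕ) : nimSum l / 2 = nimSum (l.map (· / 2)) := by
  induction l with
  | nil => rfl
  | cons x l ih => rw [nimSum_cons, Nat.xor_div_two, ih, List.map_cons, nimSum_cons]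

lemma nimSum_map_two_pow_mul (k : ℕ) (l : List ℕ) :
    nimSum (l.map (2 ^ k * ·)) = 2 ^ k * nimSum l := by
  induction l with
  | nil => simp
  | cons x l ih =>
    rw [List.map_cons, nimSum_cons, nimSum_cons, ih]
    simp only [mul_comm (2 ^ k), ← Nat.shiftLeft_eq, Nat.shiftLeft_xor_distrib]

section Vectors

variable {n : ℕ}

lemma nimSum_ofFn_mod_two (f : Fin n → ℕ) : nimSum (List.ofFn f) % 2 = (∑ i, f i) % 2 := by
  rw [nimSum_mod_two, List.sum_ofFn]

lemma even_nimSum_ofFn_iff (f : Fin n → ℕ) : Even (nimSum (List.ofFn f)) ↔ Even (∑ i, f i) := by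
  rw [Nat.even_iff, Nat.even_iff, nimSum_ofFn_mod_two]

lemma nimSum_ofFn_div_two (f : Fin n → ℕ) :
    nimSum (List.ofFn f) / 2 = nimSum (List.ofFn fun i => f i / 2) := by
  rw [nimSum_div_two, List.map_ofFn]; rfl

lemma nimSum_ofFn_eq_zero_iff (f : Fin n → ℕ) :
    nimSum (List.ofFn f) = 0 ↔ Even (∑ i, f i) ∧ nimSum (List.ofFn fun i => f i / 2) = 0 := by
  rw [Nat.even_iff, ← nimSum_ofFn_mod_two, ← nimSum_ofFn_div_two]
  omega

lemma nimSum_ofFn_two_pow_mul (k : ℕ) (f : Fin n → ℕ) :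
    nimSum (List.ofFn fun i => 2 ^ k * f i) = 2 ^ k * nimSum (List.ofFn f) := by
  rw [← nimSum_map_two_pow_mul, List.map_ofFn]; rfl

lemma nimSum_ofFn_zero : nimSum (List.ofFn fun _ : Fin n => 0) = 0 := by
  rw [List.ofFn_const]
  induction n with
  | zero => rfl
  | succ n ih => rw [List.replicate_succ, nimSum_cons, ih, Nat.xor_zero]

lemma nimSum_ofFn_fin_two (f : Fin 2 → ℕ) : nimSum (List.ofFn f) = f 0 ^^^ f 1 := by
  simp [List.ofFn_succ]

lemma exists_ne_odd_of_even_sum {a : Fin n → ℕ} (hs : Even (∑ i, a i)) {i : Fin n}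
    (hi : Odd (a i)) : ∃ j ≠ i, Odd (a j) := by
  rw [Finset.even_sum_iff_even_card_odd] at hs
  have hmem : i ∈ ({x | Odd (a x)} : Finset (Fin n)) := by simpa using hi
  have hcard : 1 < #({x | Odd (a x)} : Finset (Fin n)) := by
    have := Finset.card_pos.2 ⟨i, hmem⟩
    rcases hs with ⟨m, hm⟩; omega
  obtain ⟨j, hj, hji⟩ := Finset.exists_mem_ne hcard i
  exact ⟨j, hji, by simpa using hj⟩

lemma exists_even_of_odd_of_even_sum {a : Fin n → ℕ} (hn : Odd n) (hs : Even (∑ i, a i)) :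
    ∃ i, Even (a i) := by
  by_contra! h
  rw [Finset.even_sum_iff_even_card_odd,
    Finset.filter_true_of_mem fun i _ => Nat.not_even_iff_odd.1 (h i),
    Finset.card_univ, Fintype.card_fin] at hs
  exact Nat.not_even_iff_odd.2 hn hs

lemma exists_ne_ne_of_two_lt (hn : 2 < n) (i j : Fin n) : ∃ z, z ≠ i ∧ z ≠ j := by
  obtain ⟨z, -, hz⟩ := Finset.exists_mem_notMem_of_card_lt_card
    (s := {i, j}) (t := Finset.univ) (by simpa using Finset.card_le_two.trans_lt hn)
  simp only [Finset.mem_insert, Finset.mem_singleton, not_or] at hz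
  exact ⟨z, hz⟩

def HasMixedParity (x : Fin n → ℕ) : Prop := ∃ i j, Odd (x i) ∧ Even (x j)

lemma hasMixedParity_of_mod_two_ne {x : Fin n → ℕ} {p q : Fin n} (h : x p % 2 ≠ x q % 2) :
    HasMixedParity x := by
  simp only [HasMixedParity, Nat.odd_iff, Nat.even_iff]
  rcases Nat.mod_two_eq_zero_or_one (x p) with hp | hp
  · exact ⟨q, p, by omega, hp⟩
  · exact ⟨p, q, hp, by omega⟩

lemma hasMixedParity_or_hasMixedParity {x y : Fin n → ℕ} {p q : Fin n}
    (hp : x p % 2 ≠ y p % 2) (hq : x q % 2 = y q % 2) :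
    HasMixedParity x ∨ HasMixedParity y := by
  by_cases h : x p % 2 = x q % 2
  · exact .inr (hasMixedParity_of_mod_two_ne (p := p) (q := q) (by omega))
  · exact .inl (hasMixedParity_of_mod_two_ne h)

lemma pi_single_add_pi_single_le_one {p q : Fin n} (hpq : p ≠ q) (i : Fin n) :
    (Pi.single p 1 + Pi.single q 1 : Fin n → ℕ) i ≤ 1 := by
  by_cases hp : i = p <;> by_cases hq : i = q <;> simp [*]

lemma sum_add_div_two (a : Fin n → ℕ) {c : Fin n → ℕ} (hc : ∀ i, c i ≤ 1) :
    ∑ i, (a i + c i) / 2 = ∑ i, a i / 2 + ∑ i, a i % 2 * c i := by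
  rw [← Finset.sum_add_distrib]
  refine Finset.sum_congr rfl fun i _ => ?_
  have := hc i
  interval_cases c i <;> omega

def IsNimDifference (a : Fin n → ℕ) : Prop :=
  ∃ b : Fin n → ℕ, nimSum (List.ofFn b) = 0 ∧ nimSum (List.ofFn fun i => a i + b i) = 0

lemma isNimDifference_iff_exists_le (a : Fin n → ℕ) :
    IsNimDifference a ↔ ∃ t : Fin n → ℕ, (∀ i, a i ≤ t i) ∧ nimSum (List.ofFn t) = 0 ∧
      nimSum (List.ofFn fun i => t i - a i) = 0 := by
  constructor
  · rintro ⟨b, hb, hab⟩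
    exact ⟨fun i => a i + b i, fun i => Nat.le_add_right _ _, hab, by simpa using hb⟩
  · rintro ⟨t, hat, ht, hta⟩
    refine ⟨fun i => t i - a i, hta, ?_⟩
    rwa [show (fun i => a i + (t i - a i)) = t from funext fun i => Nat.add_sub_of_le (hat i)]

lemma isNimDifference_of_nimSum_eq_zero {a : Fin n → ℕ} (ha : nimSum (List.ofFn a) = 0) :
    IsNimDifference a :=
  ⟨fun _ => 0, nimSum_ofFn_zero, ha⟩

lemma isNimDifference_iff_carry (a : Fin n → ℕ) :
    IsNimDifference a ↔ Even (∑ i, a i) ∧ ∃ c : Fin n → ℕ, (∀ i, c i ≤ 1) ∧ Even (∑ i, c i) ∧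
      IsNimDifference fun i => (a i + c i) / 2 := by
  constructor
  · rintro ⟨b, hb, hab⟩
    rw [nimSum_ofFn_eq_zero_iff] at hb hab
    refine ⟨?_, fun i => b i % 2, fun i => Nat.le_of_lt_succ (Nat.mod_lt _ two_pos), ?_,
      fun i => b i / 2, hb.2, ?_⟩
    · simpa [Finset.sum_add_distrib, Nat.even_add, hb.1] using hab.1
    · rw [Nat.even_iff, ← Finset.sum_nat_mod, ← Nat.even_iff]; exact hb.1
    · convert hab.2 using 4; dsimp only; omega
  · rintro ⟨ha, c, hc, hcs, b, hb, hab⟩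
    refine ⟨fun i => 2 * b i + c i, ?_, ?_⟩ <;> rw [nimSum_ofFn_eq_zero_iff]
    · refine ⟨?_, ?_⟩
      · simpa [Finset.sum_add_distrib, ← Finset.mul_sum, Nat.even_add] using hcs
      · convert hb using 4; have := hc ‹_›; omega
    · refine ⟨?_, ?_⟩
      · simpa [Finset.sum_add_distrib, ← Finset.mul_sum, Nat.even_add, ha] using hcs
      · convert hab using 4; dsimp only; have := hc ‹_›; omega

lemma IsNimDifference.even_sum {a : Fin n → ℕ} (h : IsNimDifference a) : Even (∑ i, a i) :=
  ((isNimDifference_iff_carry a).1 h).1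

lemma isNimDifference_two_mul_iff (a : Fin n → ℕ) :
    IsNimDifference (fun i => 2 * a i) ↔ IsNimDifference a := by
  rw [isNimDifference_iff_carry]
  constructor
  · rintro ⟨-, c, hc, -, h⟩
    convert h using 2; have := hc ‹_›; omega
  · intro h
    refine ⟨by simp [← Finset.mul_sum], fun _ => 0, fun _ => zero_le_one, by simp, ?_⟩
    simpa using h

lemma isNimDifference_two_pow_mul_iff (k : ℕ) (a : Fin n → ℕ) :
    IsNimDifference (fun i => 2 ^ k * a i) ↔ IsNimDifference a := by
  induction k with
  | zero => simp
  | succ k ih => simp only [pow_succ', mul_assoc, isNimDifference_two_mul_iff, ih]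

lemma exists_carry_hasMixedParity (a : Fin n → ℕ) {o₁ o₂ z : Fin n} (h₁₂ : o₁ ≠ o₂)
    (hz₁ : z ≠ o₁) (hz₂ : z ≠ o₂) (ho₁ : Odd (a o₁)) (ho₂ : Odd (a o₂))
    (hpar : Even (∑ i, a i / 2) ∨ Even (a z)) :
    ∃ c : Fin n → ℕ, (∀ i, c i ≤ 1) ∧ Even (∑ i, c i) ∧ Even (∑ i, (a i + c i) / 2) ∧
      HasMixedParity fun i => (a i + c i) / 2 := by
  rw [Nat.odd_iff] at ho₁ ho₂
  by_cases hh : Even (∑ i, a i / 2)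
  · have hc := pi_single_add_pi_single_le_one h₁₂
    rcases hasMixedParity_or_hasMixedParity (x := fun i => (a i + 0) / 2) (p := o₁) (q := z)
      (y := fun i => (a i + (Pi.single o₁ 1 + Pi.single o₂ 1 : Fin n → ℕ) i) / 2)
      (by simp [h₁₂]; omega) (by simp [hz₁, hz₂]) with h | h
    · exact ⟨0, fun _ => zero_le_one, by simp, by simpa using hh, h⟩
    · refine ⟨_, hc, by simp [Finset.sum_add_distrib], ?_, h⟩
      rw [sum_add_div_two a hc]
      simpa [mul_add, Finset.sum_add_distrib, Nat.even_add, Pi.single_apply, ho₁, ho₂] using hh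
  · have hz := Nat.even_iff.1 (hpar.resolve_left hh)
    have hc₁ := pi_single_add_pi_single_le_one hz₁.symm
    have hc₂ := pi_single_add_pi_single_le_one hz₂.symm
    rcases hasMixedParity_or_hasMixedParity (p := o₁) (q := z)
      (x := fun i => (a i + (Pi.single o₁ 1 + Pi.single z 1 : Fin n → ℕ) i) / 2)
      (y := fun i => (a i + (Pi.single o₂ 1 + Pi.single z 1 : Fin n → ℕ) i) / 2)
      (by simp [h₁₂, hz₁.symm]; omega) (by simp [hz₁, hz₂]) with h | h
    · refine ⟨_, hc₁, by simp [Finset.sum_add_distrib], ?_, h⟩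
      rw [sum_add_div_two a hc₁]
      simpa [mul_add, Finset.sum_add_distrib, Nat.even_add, Pi.single_apply, ho₁, hz,
        parity_simps] using hh
    · refine ⟨_, hc₂, by simp [Finset.sum_add_distrib], ?_, h⟩
      rw [sum_add_div_two a hc₂]
      simpa [mul_add, Finset.sum_add_distrib, Nat.even_add, Pi.single_apply, ho₂, hz,
        parity_simps] using hh

theorem isNimDifference_of_even_sum_of_hasMixedParity {a : Fin n → ℕ} (hs : Even (∑ i, a i))
    (hmix : HasMixedParity a) : IsNimDifference a := by
  induction hm : ∑ i, a i using Nat.strong_induction_on generalizing a with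
  | _ m ih =>
  by_cases h0 : nimSum (List.ofFn a) = 0
  · exact isNimDifference_of_nimSum_eq_zero h0
  obtain ⟨o₁, z, ho₁, hz⟩ := hmix
  obtain ⟨o₂, h₂₁, ho₂⟩ := exists_ne_odd_of_even_sum hs ho₁
  have hz₁ : z ≠ o₁ := by rintro rfl; exact Nat.not_even_iff_odd.2 ho₁ hz
  have hz₂ : z ≠ o₂ := by rintro rfl; exact Nat.not_even_iff_odd.2 ho₂ hz
  obtain ⟨c, hc, hcs, hs', hmix'⟩ :=
    exists_carry_hasMixedParity a h₂₁.symm hz₁ hz₂ ho₁ ho₂ (.inr hz)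
  -- halving strictly decreases an entry `≥ 2`, and one exists since the nim-sum is nonzero
  obtain ⟨i, hi⟩ : ∃ i, 2 ≤ a i := by
    by_contra! h
    refine h0 ((nimSum_ofFn_eq_zero_iff a).2 ⟨hs, ?_⟩)
    simpa [Nat.div_eq_of_lt (h _)] using nimSum_ofFn_zero
  refine (isNimDifference_iff_carry a).2 ⟨hs, c, hc, hcs, ih _ ?_ hs' hmix' rfl⟩
  rw [← hm]
  exact Finset.sum_lt_sum (fun i _ => by have := hc i; omega)
    ⟨i, Finset.mem_univ _, by have := hc i; omega⟩

theorem isNimDifference_of_even_sum_div_two {a : Fin n → ℕ} (hn : 2 < n)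
    (hs : Even (∑ i, a i)) (hh : Even (∑ i, a i / 2)) (ho : ∃ i, Odd (a i)) :
    IsNimDifference a := by
  obtain ⟨o₁, ho₁⟩ := ho
  obtain ⟨o₂, h₂₁, ho₂⟩ := exists_ne_odd_of_even_sum hs ho₁
  obtain ⟨z, hz₁, hz₂⟩ := exists_ne_ne_of_two_lt hn o₁ o₂
  obtain ⟨c, hc, hcs, hs', hmix'⟩ :=
    exists_carry_hasMixedParity a h₂₁.symm hz₁ hz₂ ho₁ ho₂ (.inl hh)
  exact (isNimDifference_iff_carry a).2
    ⟨hs, c, hc, hcs, isNimDifference_of_even_sum_of_hasMixedParity hs' hmix'⟩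

lemma IsNimDifference.even_sum_div_two {a : Fin n → ℕ} (h : IsNimDifference a)
    (hodd : ∀ i, Odd (a i)) : Even (∑ i, a i / 2) := by
  obtain ⟨-, c, hc, hcs, h'⟩ := (isNimDifference_iff_carry a).1 h
  have := h'.even_sum
  rw [sum_add_div_two a hc, Nat.even_add] at this
  simpa [Nat.odd_iff.1 (hodd _), hcs] using this

lemma IsNimDifference.eq_of_fin_two {a : Fin 2 → ℕ} (h : IsNimDifference a) : a 0 = a 1 := by
  obtain ⟨b, hb, hab⟩ := h
  rw [nimSum_ofFn_fin_two, xor_eq_zero_iff] at hb hab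
  omega

theorem isNimDifference_iff_of_exists_odd {a : Fin n → ℕ} (ho : ∃ i, Odd (a i)) :
    IsNimDifference a ↔ (Odd n ∧ Even (∑ i, a i)) ∨
      (Even n ∧ ((Even (∑ i, a i) ∧ ∃ i, Even (a i)) ∨
        (Even (∑ i, a i) ∧ Even (∑ i, a i / 2) ∧ 4 ≤ n) ∨ nimSum (List.ofFn a) = 0)) := by
  constructor
  · intro h
    have hs := h.even_sum
    rcases Nat.even_or_odd n with hn | hn
    · refine .inr ⟨hn, ?_⟩
      by_cases he : ∃ i, Even (a i)
      · exact .inl ⟨hs, he⟩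
      simp only [not_exists, Nat.not_even_iff_odd] at he
      by_cases h4 : 4 ≤ n
      · exact .inr (.inl ⟨hs, h.even_sum_div_two he, h4⟩)
      obtain rfl : n = 2 := by
        obtain ⟨i, -⟩ := ho; obtain ⟨m, rfl⟩ := hn; have := i.pos; omega
      exact .inr (.inr (by rw [nimSum_ofFn_fin_two, h.eq_of_fin_two, Nat.xor_self]))
    · exact .inl ⟨hn, hs⟩
  · obtain ⟨o, ho⟩ := ho
    rintro (⟨hn, hs⟩ | ⟨-, ⟨hs, e, he⟩ | ⟨hs, hh, hn⟩ | h0⟩)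
    · obtain ⟨e, he⟩ := exists_even_of_odd_of_even_sum hn hs
      exact isNimDifference_of_even_sum_of_hasMixedParity hs ⟨o, e, ho, he⟩
    · exact isNimDifference_of_even_sum_of_hasMixedParity hs ⟨o, e, ho, he⟩
    · exact isNimDifference_of_even_sum_div_two (by omega) hs hh ⟨o, ho⟩
    · exact isNimDifference_of_nimSum_eq_zero h0

end Vectors

lemma Nat.odd_div_two_pow {x k : ℕ} (hk : 2 ^ k ∣ x) (hk' : ¬ 2 ^ (k + 1) ∣ x) :
    Odd (x / 2 ^ k) := by
  obtain ⟨m, rfl⟩ := hk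
  rw [Nat.mul_div_cancel_left _ (Nat.two_pow_pos k)]
  by_contra hm
  obtain ⟨r, rfl⟩ := Nat.not_odd_iff_even.1 hm
  exact hk' ⟨r, by ring⟩

lemma Nat.testBit_two_pow_mul_add_eq_false_iff (k x j : ℕ) :
    (2 ^ k * x).testBit (k + j) = false ↔ Even (x / 2 ^ j) := by
  rw [Nat.even_iff, Nat.mod_two_eq_zero_iff_testBit_zero, Nat.testBit_div_two_pow,
    Nat.testBit_two_pow_mul]
  simp

theorem stmt16_general (n : ℕ) (a : Fin n → ℕ)
    (k : ℕ) (hk : ∀ i, 2 ^ k ∣ a i) (hkmax : ¬ ∀ i, 2 ^ (k + 1) ∣ a i) :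
    (∃ t : Fin n → ℕ, (∀ i, a i ≤ t i) ∧
        nimSum (List.ofFn t) = 0 ∧
        nimSum (List.ofFn fun i => t i - a i) = 0) ↔
      ((Odd n ∧ (nimSum (List.ofFn a)).testBit k = false) ∨
        (Even n ∧
          (((nimSum (List.ofFn a)).testBit k = false ∧
              ∃ i, (a i).testBit k = false) ∨
            ((nimSum (List.ofFn a)).testBit k = false ∧
              (nimSum (List.ofFn a)).testBit (k + 1) = false ∧ 4 ≤ n) ∨
            nimSum (List.ofFn a) = 0))) := by
  obtain ⟨c, rfl, hodd⟩ : ∃ c : Fin n → ℕ, a = (fun i => 2 ^ k * c i) ∧ ∃ i, Odd (c i) := by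
    obtain ⟨i, hi⟩ := not_forall.1 hkmax
    exact ⟨fun i => a i / 2 ^ k, funext fun i => (Nat.mul_div_cancel' (hk i)).symm,
      i, Nat.odd_div_two_pow (hk i) hi⟩
  have hbit₀ (x : ℕ) : (2 ^ k * x).testBit k = false ↔ Even x := by
    simpa using Nat.testBit_two_pow_mul_add_eq_false_iff k x 0
  rw [← isNimDifference_iff_exists_le, isNimDifference_two_pow_mul_iff,
    isNimDifference_iff_of_exists_odd hodd]
  simp only [nimSum_ofFn_two_pow_mul, hbit₀, Nat.testBit_two_pow_mul_add_eq_false_iff, pow_one,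
    nimSum_ofFn_div_two, even_nimSum_ofFn_iff, mul_eq_zero, (Nat.two_pow_pos k).ne', false_or]

theorem stmt16 (n : ℕ) (hn : 2 ≤ n) (a : Fin n → ℕ)
    (hpos : ∃ i j, i ≠ j ∧ 0 < a i ∧ 0 < a j)
    (k : ℕ) (hk : ∀ i, 2 ^ k ∣ a i) (hkmax : ¬ ∀ i, 2 ^ (k + 1) ∣ a i) :
    (∃ t : Fin n → ℕ, (∀ i, a i ≤ t i) ∧
        nimSum (List.ofFn t) = 0 ∧
        nimSum (List.ofFn fun i => t i - a i) = 0) ↔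
      ((Odd n ∧ (nimSum (List.ofFn a)).testBit k = false) ∨
        (Even n ∧
          (((nimSum (List.ofFn a)).testBit k = false ∧
              ∃ i, (a i).testBit k = false) ∨
            ((nimSum (List.ofFn a)).testBit k = false ∧
              (nimSum (List.ofFn a)).testBit (k + 1) = false ∧ 4 ≤ n) ∨
            nimSum (List.ofFn a) = 0))) :=
  stmt16_general n a k hk hkmax
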